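/- arXiv:0812.3505 — 7 statements merged into one kernel-verified Lean document; each statement's English description precedes it below -/
import Mathlib

section
/- Fix τ > 0 and let 1 < R₀ < R₀'. If π ∈ (0,1) satisfies 1 − π = (1 + π R₀ τ²)^(−1/τ²) and π' ∈ (0,1) satisfies 1 − π' = (1 + π' R₀' τ²)^(−1/τ²), then π < π'. In words: the probability of a major outbreak is strictly increasing in the basic reproduction number R₀. -/
/-!
The map `g x = (1 + x R₀' τ²) ^ (-1/τ²)` is convex with `g 0 = 1`, so its secant slope
`(g x - 1) / x` is nondecreasing in `x`. The balance equation for `R₀'` makes this slope `-1` at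
`π'`; at `π` it is below `-1`, because `g π < (1 + π R₀ τ²) ^ (-1/τ²) = 1 - π`. Hence `π < π'`.
-/

section

-- Kept inside a section: under `open Real`, `π` in the theorem below would denote `Real.pi`.
open Real Set

theorem convexOn_rpow_of_nonpos {p : ℝ} (hp : p ≤ 0) : ConvexOn ℝ (Ioi 0) fun x : ℝ ↦ x ^ p := by
  have hlog : ConvexOn ℝ (Ioi 0) fun x ↦ p * log x := by
    simpa [neg_mul_neg] using strictConcaveOn_log_Ioi.concaveOn.neg.smul (neg_nonneg.2 hp)
  have himage : Convex ℝ ((fun x ↦ p * log x) '' Ioi 0) :=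
    ((convex_Ioi 0).isPreconnected.image _
      ((continuousOn_log.mono fun x hx ↦ (mem_Ioi.1 hx).ne').const_smul p)).convex
  refine (convexOn_exp.subset (subset_univ _) himage |>.comp hlog
    (exp_monotone.monotoneOn _)).congr fun x hx ↦ ?_
  simp [rpow_def_of_pos (mem_Ioi.1 hx), mul_comm]

theorem convexOn_one_add_mul_rpow {a p : ℝ} (ha : 0 ≤ a) (hp : p ≤ 0) :
    ConvexOn ℝ (Ici 0) fun x : ℝ ↦ (1 + x * a) ^ p := by
  have := (convexOn_rpow_of_nonpos hp).comp_affineMap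
    ((LinearMap.mulRight ℝ a).toAffineMap + AffineMap.const ℝ ℝ 1)
  refine (this.subset (fun x hx ↦ ?_) (convex_Ici 0)).congr fun x _ ↦ ?_
  · show 0 < x * a + 1
    exact add_pos_of_nonneg_of_pos (mul_nonneg hx ha) one_pos
  · simp [add_comm]

theorem lt_of_one_sub_eq_one_add_mul_rpow {a b s x y : ℝ} (ha : 0 ≤ a) (hab : a < b) (hs : 0 < s)
    (hx : 0 < x) (hy : 0 < y) (hxa : 1 - x = (1 + x * a) ^ (-s))
    (hyb : 1 - y = (1 + y * b) ^ (-s)) : x < y := by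
  by_contra! hyx
  have hslope : ((1 + y * b) ^ (-s) - 1) / y ≤ ((1 + x * b) ^ (-s) - 1) / x := by
    simpa using (convexOn_one_add_mul_rpow (ha.trans hab.le) (neg_nonpos.2 hs.le)).secant_mono
      self_mem_Ici hy.le (mem_Ici.2 hx.le) hy.ne' hx.ne' hyx
  have hxb : (1 + x * b) ^ (-s) < 1 - x := by
    rw [hxa]
    exact rpow_lt_rpow_of_neg (by positivity) (by gcongr) (neg_neg_of_pos hs)
  rw [← hyb, sub_sub_cancel_left, neg_div_self hy.ne', le_div_iff₀ hx] at hslope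
  linarith

end

/-- The probability of a major outbreak is strictly increasing in `R₀` (for fixed
coefficient of variation `τ` of the infectious period). -/
theorem outbreak_probability_increasing_in_R0 (τ R₀ R₀' π π' : ℝ) (hτ : 0 < τ)
    (hR₀ : 1 < R₀) (hR₀' : R₀ < R₀')
    (hπ : π ∈ Set.Ioo (0 : ℝ) 1) (hπ' : π' ∈ Set.Ioo (0 : ℝ) 1)
    (hbal : 1 - π = (1 + π * R₀ * τ ^ 2) ^ (-(1 / τ ^ 2) : ℝ))
    (hbal' : 1 - π' = (1 + π' * R₀' * τ ^ 2) ^ (-(1 / τ ^ 2) : ℝ)) :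
    π < π' := by
  rw [mul_assoc] at hbal hbal'
  exact lt_of_one_sub_eq_one_add_mul_rpow (by positivity) (by gcongr) (by positivity) hπ.1 hπ'.1
    hbal hbal'
end

section
/- Fix R₀ > 1 and let 0 < τ < τ'. If π ∈ (0,1) satisfies 1 − π = (1 + π R₀ τ²)^(−1/τ²) and π' ∈ (0,1) satisfies 1 − π' = (1 + π' R₀ τ'²)^(−1/τ'²), then π' < π. In words: the more random the infectious period (the larger its coefficient of variation), the smaller the probability of a major outbreak. -/
/-!
Taking logarithms, `π` solves the balance equation for `τ` iff `B(τ², π) = 0`, where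
`B(s, p) = s log (1 - p) + log (1 + p R₀ s)`. Both variables enter only through quotients
`log (1 + c x) / x`, which are strictly decreasing in `x > 0` because they are `c` times a secant
slope of the strictly concave `log` at `1`. Hence `B(s, π) / s` decreases in `s`, so
`B(τ'², π) < 0`, while `B(τ'², p) / p` decreases in `p`, so `B(τ'², p) ≥ 0` for every `p ≤ π'`.
-/

theorem log_one_add_mul_div_lt {c x y : ℝ} (hc : c ≠ 0) (hx : 0 < x) (hxy : x < y)
    (hy : 0 < 1 + c * y) : Real.log (1 + c * y) / y < Real.log (1 + c * x) / x := by
  have hy0 : 0 < y := hx.trans hxy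
  have hcx : 0 < 1 + c * x := by nlinarith
  have slope (z : ℝ) (hz : 0 < z) : Real.log (1 + c * z) / z
      = c * ((Real.log (1 + c * z) - Real.log 1) / ((1 + c * z) - 1)) := by
    rw [Real.log_one, sub_zero, add_sub_cancel_left]
    field_simp
  have secant {u v : ℝ} (hu : 0 < u) (hv : 0 < v) (hu1 : u ≠ 1) (hv1 : v ≠ 1) (huv : u < v) :=
    strictConcaveOn_log_Ioi.secant_strict_mono (Set.mem_Ioi.2 one_pos) (Set.mem_Ioi.2 hu)
      (Set.mem_Ioi.2 hv) hu1 hv1 huv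
  rw [slope x hx, slope y hy0]
  rcases hc.lt_or_gt with hc | hc
  · exact mul_lt_mul_of_neg_left
      (secant hy hcx (by simp [hc.ne, hy0.ne']) (by simp [hc.ne, hx.ne']) (by nlinarith)) hc
  · exact mul_lt_mul_of_pos_left
      (secant hcx hy (by simp [hc.ne', hx.ne']) (by simp [hc.ne', hy0.ne']) (by nlinarith)) hc

-- `logBalance R₀ τ² π` is `τ²` times the logarithm of the ratio of the two sides of the balance
-- equation.
noncomputable def logBalance (R s p : ℝ) : ℝ :=
  s * Real.log (1 - p) + Real.log (1 + p * R * s)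

theorem logBalance_eq_zero {R s p : ℝ} (hs : s ≠ 0) (hpos : 0 < 1 + p * R * s)
    (h : 1 - p = (1 + p * R * s) ^ (-(1 / s) : ℝ)) : logBalance R s p = 0 := by
  rw [logBalance, h, Real.log_rpow hpos]
  field_simp
  ring

theorem logBalance_neg_of_lt {R s s' p : ℝ} (hR : 0 < R) (hp : 0 < p) (hs : 0 < s)
    (hss' : s < s') (h : logBalance R s p = 0) : logBalance R s' p < 0 := by
  have hs' : 0 < s' := hs.trans hss'
  have hpR : 0 < p * R := mul_pos hp hR
  have key := log_one_add_mul_div_lt hpR.ne' hs hss' (by positivity)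
  have hdiv (σ : ℝ) (hσ : 0 < σ) :
      logBalance R σ p / σ = Real.log (1 - p) + Real.log (1 + p * R * σ) / σ := by
    rw [logBalance]
    field_simp
  have : logBalance R s' p / s' < logBalance R s p / s := by
    rw [hdiv s hs, hdiv s' hs']
    linarith
  rw [h, zero_div] at this
  exact neg_of_div_neg_left this hs'.le

theorem logBalance_pos_of_lt {R s p q : ℝ} (hR : 0 < R) (hs : 0 < s) (hp : 0 < p) (hpq : p < q)
    (hq : q < 1) (h : logBalance R s q = 0) : 0 < logBalance R s p := by
  have hdiv (r : ℝ) (hr : 0 < r) : logBalance R s r / r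
      = s * (Real.log (1 + -1 * r) / r) + Real.log (1 + R * s * r) / r := by
    rw [logBalance]
    field_simp
    ring_nf
  have hRs : 0 < R * s := mul_pos hR hs
  have h₁ := log_one_add_mul_div_lt (by norm_num : (-1 : ℝ) ≠ 0) hp hpq (by linarith)
  have h₂ := log_one_add_mul_div_lt hRs.ne' hp hpq (by nlinarith)
  have : logBalance R s q / q < logBalance R s p / p := by
    rw [hdiv p hp, hdiv q (hp.trans hpq)]
    linarith [mul_lt_mul_of_pos_left h₁ hs]
  rw [h, zero_div] at this
  exact (div_pos_iff_of_pos_right hp).1 this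

/-- The probability of a major outbreak is strictly decreasing in the coefficient of
variation `τ` of the infectious period (for fixed `R₀ > 1`). -/
theorem outbreak_probability_decreasing_in_cv (R₀ τ τ' π π' : ℝ) (hR₀ : 1 < R₀)
    (hτ : 0 < τ) (hττ' : τ < τ')
    (hπ : π ∈ Set.Ioo (0 : ℝ) 1) (hπ' : π' ∈ Set.Ioo (0 : ℝ) 1)
    (hbal : 1 - π = (1 + π * R₀ * τ ^ 2) ^ (-(1 / τ ^ 2) : ℝ))
    (hbal' : 1 - π' = (1 + π' * R₀ * τ' ^ 2) ^ (-(1 / τ' ^ 2) : ℝ)) :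
    π' < π := by
  obtain ⟨hπ0, -⟩ := hπ
  obtain ⟨hπ'0, hπ'1⟩ := hπ'
  have hR : 0 < R₀ := by linarith
  have hτ' : 0 < τ' := hτ.trans hττ'
  have hsq : τ ^ 2 < τ' ^ 2 := by gcongr
  have hB : logBalance R₀ (τ ^ 2) π = 0 :=
    logBalance_eq_zero (by positivity) (by positivity) hbal
  have hB' : logBalance R₀ (τ' ^ 2) π' = 0 :=
    logBalance_eq_zero (by positivity) (by positivity) hbal'
  have hneg : logBalance R₀ (τ' ^ 2) π < 0 :=
    logBalance_neg_of_lt hR hπ0 (by positivity) hsq hB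
  by_contra! hle
  rcases hle.eq_or_lt with rfl | hlt
  · exact hneg.ne hB'
  · exact hneg.not_gt (logBalance_pos_of_lt hR (by positivity) hπ0 hlt hπ'1 hB')
end

section
/- Let μ_L, μ_I, τ_L, τ_I > 0 and λ > 0, set R₀ = λ μ_I, and let L and I be independent random variables where L follows the Gamma distribution with shape 1/τ_L² and rate 1/(μ_L τ_L²) and I follows the Gamma distribution with shape 1/τ_I² and rate 1/(μ_I τ_I²). Then for α > 0, the equation λ ∫₀^∞ e^{−α t} P(L < t and t < L + I) dt = 1 holds if and only if α = (R₀/μ_I) · (1 + α τ_L² μ_L)^(−1/τ_L²) · (1 − (1 + α τ_I² μ_I)^(−1/τ_I²)). -/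
/-!
Tonelli's theorem turns `∫₀^∞ e^{-αt} P(L < t < L + I) dt` into
`E ∫_L^{L+I} e^{-αt} dt = (E e^{-αL} - E e^{-α(L+I)}) / α`, and by independence this is
`M_L(-α) (1 - M_I(-α)) / α` with `M` the moment generating function. Multiplying the
Gamma(a, r) density by `e^{tx}` gives `(r / (r - t))^a` times the Gamma(a, r - t) density, so
`M(-α) = (1 + α τ² μ)^(-1/τ²)` for the Gamma law with mean `μ` and coefficient of variation `τ`.
-/

open MeasureTheory ProbabilityTheory Real Set
open scoped ENNReal

section Gamma

variable {Ω : Type*} [MeasurableSpace Ω] {μ : Measure Ω} {X : Ω → ℝ}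

lemma measurable_gammaPDF (a r : ℝ) : Measurable (gammaPDF a r) :=
  (measurable_gammaPDFReal a r).ennreal_ofReal

lemma gammaPDF_mul_exp {a r t : ℝ} (ha : 0 < a) (hr : 0 < r) (ht : t < r) (x : ℝ) :
    gammaPDF a r x * ENNReal.ofReal (exp (t * x))
      = ENNReal.ofReal ((r / (r - t)) ^ a) * gammaPDF a (r - t) x := by
  have hrt : 0 < r - t := sub_pos.2 ht
  rw [gammaPDF, gammaPDF, ← ENNReal.ofReal_mul (gammaPDFReal_nonneg ha hr x),
    ← ENNReal.ofReal_mul (by positivity)]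
  congr 1
  unfold gammaPDFReal
  split_ifs
  · rw [div_rpow hr.le hrt.le, show -((r - t) * x) = -(r * x) + t * x by ring, exp_add]
    have := (rpow_pos_of_pos hrt a).ne'
    field_simp
  · simp

lemma lintegral_exp_mul_gammaMeasure {a r t : ℝ} (ha : 0 < a) (hr : 0 < r) (ht : t < r) :
    ∫⁻ x, ENNReal.ofReal (exp (t * x)) ∂gammaMeasure a r
      = ENNReal.ofReal ((r / (r - t)) ^ a) := by
  rw [gammaMeasure,
    lintegral_withDensity_eq_lintegral_mul _ (measurable_gammaPDF a r) (by fun_prop)]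
  simp only [Pi.mul_apply, gammaPDF_mul_exp ha hr ht]
  rw [lintegral_const_mul _ (measurable_gammaPDF _ _),
    lintegral_gammaPDF_eq_one ha (sub_pos.2 ht), mul_one]

lemma mgf_id_gammaMeasure {a r t : ℝ} (ha : 0 < a) (hr : 0 < r) (ht : t < r) :
    mgf id (gammaMeasure a r) t = (r / (r - t)) ^ a := by
  rw [mgf, integral_eq_lintegral_of_nonneg_ae (.of_forall fun x ↦ (exp_pos _).le) (by fun_prop)]
  simp only [id, lintegral_exp_mul_gammaMeasure ha hr ht]
  exact ENNReal.toReal_ofReal (by positivity)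

lemma mgf_neg_of_map_eq_gammaMeasure {m τ s : ℝ} (hX : AEMeasurable X μ) (hm : 0 < m)
    (hτ : 0 < τ) (hdist : μ.map X = gammaMeasure (1 / τ ^ 2) (1 / (m * τ ^ 2)))
    (hs : 0 < 1 + s * τ ^ 2 * m) :
    mgf X μ (-s) = (1 + s * τ ^ 2 * m) ^ (-(1 / τ ^ 2)) := by
  rw [← mgf_id_map hX, hdist, mgf_id_gammaMeasure (by positivity) (by positivity),
    rpow_neg hs.le, ← inv_rpow hs.le]
  · congr 1
    field_simp
    ring
  · rw [lt_div_iff₀ (by positivity)]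
    linarith

lemma ae_nonneg_of_map_eq_gammaMeasure {a r : ℝ} (hX : AEMeasurable X μ)
    (hdist : μ.map X = gammaMeasure a r) : ∀ᵐ ω ∂μ, 0 ≤ X ω := by
  refine ae_of_ae_map hX ?_
  rw [hdist, gammaMeasure, ae_withDensity_iff (measurable_gammaPDF a r)]
  exact .of_forall fun x hx ↦ not_lt.1 fun hneg ↦ hx (gammaPDF_of_neg hneg)

end Gamma

lemma lintegral_Ioo_exp_neg_mul {α : ℝ} (hα : 0 < α) (a b : ℝ) :
    ∫⁻ t in Ioo a b, ENNReal.ofReal (exp (-α * t))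
      = ENNReal.ofReal ((exp (-α * a) - exp (-α * b)) / α) := by
  rcases le_or_gt a b with hab | hba
  · rw [← ofReal_integral_eq_lintegral_ofReal
        ((by fun_prop : Continuous fun t ↦ exp (-α * t)).integrableOn_Icc.mono_set
          Ioo_subset_Icc_self) (.of_forall fun _ ↦ (exp_pos _).le),
      integral_Ioc_eq_integral_Ioo.symm, ← intervalIntegral.integral_of_le hab,
      intervalIntegral.integral_comp_mul_left (fun t ↦ exp t) (neg_ne_zero.2 hα.ne'),
      integral_exp]
    congr 1
    rw [smul_eq_mul, inv_neg]
    ring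
  · rw [Ioo_eq_empty_of_le hba.le, Measure.restrict_empty, lintegral_zero_measure, eq_comm,
      ENNReal.ofReal_eq_zero]
    exact div_nonpos_of_nonpos_of_nonneg (sub_nonpos.2 (exp_le_exp.2 (by nlinarith))) hα.le

section Sojourn

variable {Ω : Type*} [MeasurableSpace Ω] {μ : Measure Ω} {L I : Ω → ℝ} {α : ℝ}

lemma measurableSet_lt_lt_add (hL : Measurable L) (hI : Measurable I) :
    MeasurableSet {p : ℝ × Ω | L p.2 < p.1 ∧ p.1 < L p.2 + I p.2} :=
  (measurableSet_lt (by fun_prop) measurable_fst).inter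
    (measurableSet_lt measurable_fst (by fun_prop))

lemma lintegral_exp_neg_mul_measure_lt_lt_add [SFinite μ] (hL : Measurable L)
    (hI : Measurable I) (hL0 : ∀ᵐ ω ∂μ, 0 ≤ L ω) (hα : 0 < α) :
    ∫⁻ t in Ioi 0, ENNReal.ofReal (exp (-α * t)) * μ {ω | L ω < t ∧ t < L ω + I ω}
      = ∫⁻ ω, ENNReal.ofReal ((exp (-α * L ω) - exp (-α * (L ω + I ω))) / α) ∂μ := by
  set f : ℝ → ℝ≥0∞ := fun t ↦ ENNReal.ofReal (exp (-α * t))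
  have hf : AEMeasurable (Function.uncurry fun t ω ↦ (Ioo (L ω) (L ω + I ω)).indicator f t)
      ((volume.restrict (Ioi 0)).prod μ) :=
    ((by fun_prop : Measurable fun p : ℝ × Ω ↦ f p.1).indicator
      (measurableSet_lt_lt_add hL hI)).aemeasurable
  calc _ = ∫⁻ t in Ioi 0, ∫⁻ ω, (Ioo (L ω) (L ω + I ω)).indicator f t ∂μ := by
        refine lintegral_congr fun t ↦ ?_
        have hS : MeasurableSet {ω | L ω < t ∧ t < L ω + I ω} :=
          (measurableSet_lt_lt_add hL hI).preimage measurable_prodMk_left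
        rw [← lintegral_indicator_const hS]
        rfl
    _ = ∫⁻ ω, (∫⁻ t in Ioi 0, (Ioo (L ω) (L ω + I ω)).indicator f t) ∂μ :=
        lintegral_lintegral_swap hf
    _ = _ := lintegral_congr_ae <| hL0.mono fun ω hω ↦ by
        dsimp only
        rw [lintegral_indicator measurableSet_Ioo, Measure.restrict_restrict measurableSet_Ioo,
          inter_eq_left.2 (Ioo_subset_Ioi_self.trans (Ioi_subset_Ioi hω)),
          lintegral_Ioo_exp_neg_mul hα]

lemma integral_exp_neg_mul_measure_lt_lt_add [IsFiniteMeasure μ] (hL : Measurable L)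
    (hI : Measurable I) (hL0 : ∀ᵐ ω ∂μ, 0 ≤ L ω) (hI0 : ∀ᵐ ω ∂μ, 0 ≤ I ω) (hα : 0 < α) :
    ∫ t in Ioi 0, exp (-α * t) * (μ {ω | L ω < t ∧ t < L ω + I ω}).toReal
      = (mgf L μ (-α) - mgf (L + I) μ (-α)) / α := by
  have hint : ∀ X : Ω → ℝ, Measurable X → (∀ᵐ ω ∂μ, 0 ≤ X ω) →
      Integrable (fun ω ↦ exp (-α * X ω)) μ := fun X hX hX0 ↦
    .of_bound (by fun_prop) 1 <| hX0.mono fun ω hω ↦ by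
      rw [norm_of_nonneg (exp_pos _).le, exp_le_one_iff]
      nlinarith
  have hLI0 : ∀ᵐ ω ∂μ, 0 ≤ L ω + I ω := by filter_upwards [hL0, hI0] with ω using add_nonneg
  have hdiff : ∀ᵐ ω ∂μ, 0 ≤ (exp (-α * L ω) - exp (-α * (L ω + I ω))) / α :=
    hI0.mono fun ω hω ↦ div_nonneg (sub_nonneg.2 (exp_le_exp.2 (by nlinarith))) hα.le
  have hprob : Measurable fun t ↦ μ {ω | L ω < t ∧ t < L ω + I ω} :=
    measurable_measure_prodMk_left (measurableSet_lt_lt_add hL hI)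
  calc _ = (∫⁻ t in Ioi 0,
          ENNReal.ofReal (exp (-α * t)) * μ {ω | L ω < t ∧ t < L ω + I ω}).toReal := by
        rw [integral_eq_lintegral_of_nonneg_ae
          (.of_forall fun t ↦ mul_nonneg (exp_pos _).le ENNReal.toReal_nonneg)
          ((by fun_prop : Measurable fun t ↦ exp (-α * t)).mul
            hprob.ennreal_toReal).aestronglyMeasurable]
        congr 1
        refine lintegral_congr fun t ↦ ?_
        rw [ENNReal.ofReal_mul (exp_pos _).le, ENNReal.ofReal_toReal (measure_ne_top _ _)]
    _ = ∫ ω, (exp (-α * L ω) - exp (-α * (L ω + I ω))) / α ∂μ := by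
        rw [lintegral_exp_neg_mul_measure_lt_lt_add hL hI hL0 hα,
          integral_eq_lintegral_of_nonneg_ae hdiff (by fun_prop)]
    _ = _ := by
        rw [integral_div,
          integral_sub (hint L hL hL0) (hint (fun ω ↦ L ω + I ω) (hL.add hI) hLI0)]
        rfl

end Sojourn

theorem malthusian_equation_gamma_general {Ω : Type*} [MeasureSpace Ω]
    [IsProbabilityMeasure (ℙ : Measure Ω)]
    (μL μI τL τI lam : ℝ) (hμL : 0 < μL) (hμI : 0 < μI) (hτL : 0 < τL) (hτI : 0 < τI)
    (R₀ : ℝ) (hR₀ : R₀ = lam * μI)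
    (L I : Ω → ℝ) (hL : Measurable L) (hI : Measurable I) (hindep : IndepFun L I)
    (hLdist : Measure.map L ℙ = gammaMeasure (1 / τL ^ 2) (1 / (μL * τL ^ 2)))
    (hIdist : Measure.map I ℙ = gammaMeasure (1 / τI ^ 2) (1 / (μI * τI ^ 2)))
    (α : ℝ) (hα : 0 < α) :
    (lam * ∫ t in Set.Ioi (0 : ℝ),
        Real.exp (-α * t) * (ℙ {ω | L ω < t ∧ t < L ω + I ω}).toReal = 1)
      ↔ α = (R₀ / μI) * (1 + α * τL ^ 2 * μL) ^ (-(1 / τL ^ 2) : ℝ)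
          * (1 - (1 + α * τI ^ 2 * μI) ^ (-(1 / τI ^ 2) : ℝ)) := by
  rw [integral_exp_neg_mul_measure_lt_lt_add hL hI
      (ae_nonneg_of_map_eq_gammaMeasure hL.aemeasurable hLdist)
      (ae_nonneg_of_map_eq_gammaMeasure hI.aemeasurable hIdist) hα,
    hindep.mgf_add' hL.aestronglyMeasurable hI.aestronglyMeasurable,
    mgf_neg_of_map_eq_gammaMeasure hL.aemeasurable hμL hτL hLdist (by positivity),
    mgf_neg_of_map_eq_gammaMeasure hI.aemeasurable hμI hτI hIdist (by positivity),
    hR₀, mul_div_cancel_right₀ _ hμI.ne', ← mul_div_assoc, div_eq_one_iff_eq hα.ne', eq_comm,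
    mul_one_sub, mul_sub, ← mul_assoc]

/-- For independent Gamma distributed latent and infectious periods (means `μ_L`, `μ_I`,
coefficients of variation `τ_L`, `τ_I`) and `R₀ = λ μ_I`, the Malthusian equation
`λ ∫₀^∞ e^{-α t} P(L < t < L + I) dt = 1` is equivalent to
`α = (R₀/μ_I)(1 + α τ_L² μ_L)^(-1/τ_L²)(1 - (1 + α τ_I² μ_I)^(-1/τ_I²))`. -/
theorem malthusian_equation_gamma {Ω : Type*} [MeasureSpace Ω]
    [IsProbabilityMeasure (ℙ : Measure Ω)]
    (μL μI τL τI lam : ℝ) (hμL : 0 < μL) (hμI : 0 < μI) (hτL : 0 < τL) (hτI : 0 < τI)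
    (hlam : 0 < lam) (R₀ : ℝ) (hR₀ : R₀ = lam * μI)
    (L I : Ω → ℝ) (hL : Measurable L) (hI : Measurable I) (hindep : IndepFun L I)
    (hLdist : Measure.map L ℙ = gammaMeasure (1 / τL ^ 2) (1 / (μL * τL ^ 2)))
    (hIdist : Measure.map I ℙ = gammaMeasure (1 / τI ^ 2) (1 / (μI * τI ^ 2)))
    (α : ℝ) (hα : 0 < α) :
    (lam * ∫ t in Set.Ioi (0 : ℝ),
        Real.exp (-α * t) * (ℙ {ω | L ω < t ∧ t < L ω + I ω}).toReal = 1)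
      ↔ α = (R₀ / μI) * (1 + α * τL ^ 2 * μL) ^ (-(1 / τL ^ 2) : ℝ)
          * (1 - (1 + α * τI ^ 2 * μI) ^ (-(1 / τI ^ 2) : ℝ)) :=
  malthusian_equation_gamma_general μL μI τL τI lam hμL hμI hτL hτI R₀ hR₀ L I hL hI hindep hLdist
    hIdist α hα
end

section
/- Let μ_L, μ_I, τ_L, τ_I > 0 and R₀ > 1. Then there exists a unique α > 0 satisfying α = (R₀/μ_I) · (1 + α τ_L² μ_L)^(−1/τ_L²) · (1 − (1 + α τ_I² μ_I)^(−1/τ_I²)). -/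
/-!
Dividing by `α`, the equation reads `F α = 1` for
`F α = c (1 + a α)^(-p) · (1 - (1 + b α)^(-q)) / α`, with `c = R₀/μ_I`, `a = τ_L² μ_L`,
`p = 1/τ_L²`, `b = τ_I² μ_I`, `q = 1/τ_I²`. The last factor is `-b` times the slope of the secant
of the strictly convex function `u ↦ u^(-q)` between `1` and `1 + b α`, so it is strictly
decreasing, and hence so is `F` on `(0, ∞)`. As `α → 0⁺` that slope tends to the derivative `-q`,
so `F α → c b q = R₀ > 1`, whereas `F c < 1`; the intermediate value theorem gives the root.
-/

open Set Filter Topology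

lemma strictConvexOn_rpow_neg {q : ℝ} (hq : 0 < q) :
    StrictConvexOn ℝ (Ioi 0) fun u : ℝ ↦ u ^ (-q) := by
  refine StrictMonoOn.strictConvexOn_of_deriv (convex_Ioi 0)
    (fun u hu ↦ (Real.continuousAt_rpow_const u _ (Or.inl hu.ne')).continuousWithinAt) ?_
  rw [interior_Ioi]
  intro x hx y _ hxy
  simp only [Real.deriv_rpow_const]
  have := Real.rpow_lt_rpow_of_neg hx hxy (by linarith : -q - 1 < 0)
  nlinarith

lemma strictAntiOn_one_sub_rpow_neg_div_sub_one {q : ℝ} (hq : 0 < q) :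
    StrictAntiOn (fun u : ℝ ↦ (1 - u ^ (-q)) / (u - 1)) (Ioi 1) := by
  intro x hx y hy hxy
  have h := (strictConvexOn_rpow_neg hq).secant_strict_mono (a := 1) (mem_Ioi.2 one_pos)
    (zero_lt_one.trans (mem_Ioi.1 hx)) (zero_lt_one.trans (mem_Ioi.1 hy)) hx.ne' hy.ne' hxy
  simp only [Real.one_rpow] at h
  simp only [← neg_sub (_ ^ (-q)) (1 : ℝ), neg_div]
  exact neg_lt_neg h

lemma tendsto_one_sub_rpow_neg_div_sub_one (q : ℝ) :
    Tendsto (fun u : ℝ ↦ (1 - u ^ (-q)) / (u - 1)) (𝓝[>] 1) (𝓝 q) := by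
  have h := hasDerivAt_iff_tendsto_slope.1
    (Real.hasDerivAt_rpow_const (x := 1) (p := -q) (Or.inl one_ne_zero))
  simp only [Real.one_rpow, mul_one] at h
  have := (h.mono_left (nhdsWithin_mono _ fun u (hu : 1 < u) ↦ hu.ne')).neg
  rw [neg_neg] at this
  refine this.congr fun u ↦ ?_
  rw [slope_def_field, Real.one_rpow, ← neg_div, neg_sub]

lemma StrictAntiOn.existsUnique_pos_eq {f : ℝ → ℝ} {L t y : ℝ}
    (hcont : ContinuousOn f (Ioi 0)) (hanti : StrictAntiOn f (Ioi 0))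
    (hlim : Tendsto f (𝓝[>] 0) (𝓝 L)) (htL : t < L) (hy : 0 < y) (hfy : f y < t) :
    ∃! x, 0 < x ∧ f x = t := by
  obtain ⟨x, hxt, hx0, hxy⟩ :=
    ((hlim.eventually_const_lt htL).and (Ioo_mem_nhdsGT hy)).exists
  obtain ⟨z, hz, hfz⟩ := intermediate_value_Icc' hxy.le (hcont.mono fun w hw ↦ hx0.trans_le hw.1)
    ⟨hfy.le, hxt.le⟩
  have hz0 : 0 < z := hx0.trans_le hz.1
  exact ⟨z, ⟨hz0, hfz⟩, fun w ⟨hw, hfw⟩ ↦ hanti.injOn hw hz0 (hfw.trans hfz.symm)⟩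

lemma one_sub_one_add_mul_rpow_neg_div_eq {b q x : ℝ} (hb : b ≠ 0) (hx : x ≠ 0) :
    (1 - (1 + x * b) ^ (-q)) / x = b * ((1 - (1 + x * b) ^ (-q)) / (1 + x * b - 1)) := by
  field_simp
  ring

lemma strictAntiOn_one_sub_one_add_mul_rpow_neg_div {b q : ℝ} (hb : 0 < b) (hq : 0 < q) :
    StrictAntiOn (fun x : ℝ ↦ (1 - (1 + x * b) ^ (-q)) / x) (Ioi 0) := by
  intro x hx y hy hxy
  simp only [one_sub_one_add_mul_rpow_neg_div_eq hb.ne' hx.ne',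
    one_sub_one_add_mul_rpow_neg_div_eq hb.ne' hy.ne']
  have hmem : ∀ z : ℝ, 0 < z → 1 + z * b ∈ Ioi 1 := fun z hz ↦ by
    simpa using mul_pos hz hb
  exact mul_lt_mul_of_pos_left (strictAntiOn_one_sub_rpow_neg_div_sub_one hq (hmem x hx)
    (hmem y hy) (by gcongr)) hb

lemma tendsto_one_sub_one_add_mul_rpow_neg_div {b : ℝ} (hb : 0 < b) (q : ℝ) :
    Tendsto (fun x : ℝ ↦ (1 - (1 + x * b) ^ (-q)) / x) (𝓝[>] 0) (𝓝 (b * q)) := by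
  have hshift : Tendsto (fun x : ℝ ↦ 1 + x * b) (𝓝[>] 0) (𝓝[>] 1) := by
    refine tendsto_nhdsWithin_of_tendsto_nhds_of_eventually_within _ ?_ ?_
    · exact ((by fun_prop : Continuous fun x : ℝ ↦ 1 + x * b).tendsto' 0 1 (by simp)).mono_left
        nhdsWithin_le_nhds
    · filter_upwards [self_mem_nhdsWithin] with x (hx : 0 < x)
      simpa using mul_pos hx hb
  refine ((tendsto_one_sub_rpow_neg_div_sub_one q).comp hshift |>.const_mul b).congr' ?_
  filter_upwards [self_mem_nhdsWithin] with x (hx : 0 < x)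
  exact (one_sub_one_add_mul_rpow_neg_div_eq hb.ne' hx.ne').symm

lemma one_add_mul_rpow_neg_mem_Ioc {a p x : ℝ} (ha : 0 ≤ a) (hp : 0 ≤ p) (hx : 0 ≤ x) :
    (1 + x * a) ^ (-p) ∈ Ioc 0 1 :=
  ⟨Real.rpow_pos_of_pos (by positivity) _,
    Real.rpow_le_one_of_one_le_of_nonpos (by nlinarith) (by linarith)⟩

lemma one_sub_one_add_mul_rpow_neg_mem_Ioo {b q x : ℝ} (hb : 0 < b) (hq : 0 < q) (hx : 0 < x) :
    1 - (1 + x * b) ^ (-q) ∈ Ioo 0 1 :=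
  ⟨sub_pos.2 (Real.rpow_lt_one_of_one_lt_of_neg (by nlinarith) (by linarith)),
    sub_lt_self _ (Real.rpow_pos_of_pos (by positivity) _)⟩

lemma existsUnique_pos_eq_mul_rpow_neg_mul_one_sub_rpow_neg {c a b p q : ℝ} (ha : 0 ≤ a)
    (hb : 0 < b) (hp : 0 ≤ p) (hq : 0 < q) (hc : 1 < c * (b * q)) :
    ∃! x, 0 < x ∧ x = c * (1 + x * a) ^ (-p) * (1 - (1 + x * b) ^ (-q)) := by
  set A := fun x : ℝ ↦ (1 + x * a) ^ (-p)
  set G := fun x : ℝ ↦ (1 - (1 + x * b) ^ (-q)) / x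
  have hc0 : 0 < c := pos_of_mul_pos_left (one_pos.trans hc) (by positivity)
  have hbase : ∀ x : ℝ, 0 < x → 0 < 1 + x * a := fun x hx ↦ by positivity
  have hA : ∀ x : ℝ, 0 < x → A x ∈ Ioc 0 1 := fun x hx ↦ one_add_mul_rpow_neg_mem_Ioc ha hp hx.le
  have hg : ∀ x : ℝ, 0 < x → 1 - (1 + x * b) ^ (-q) ∈ Ioo 0 1 := fun x hx ↦
    one_sub_one_add_mul_rpow_neg_mem_Ioo hb hq hx
  have hgap : ∀ x : ℝ, 0 < x → (x = c * A x * (1 - (1 + x * b) ^ (-q)) ↔ c * A x * G x = 1) :=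
    fun x hx ↦ by rw [← mul_div_assoc, div_eq_one_iff_eq hx.ne', eq_comm]
  refine (existsUnique_congr fun x ↦ and_congr_right (hgap x)).2 ?_
  refine StrictAntiOn.existsUnique_pos_eq (L := c * (b * q)) ?_ ?_ ?_ hc hc0 ?_
  · have hAcont : ContinuousOn A (Ioi 0) :=
      ContinuousOn.rpow_const (by fun_prop) fun x hx ↦ Or.inl (hbase x hx).ne'
    have hGcont : ContinuousOn G (Ioi 0) :=
      (continuousOn_const.sub (ContinuousOn.rpow_const (by fun_prop) fun x hx ↦
        Or.inl (by simp only [mem_Ioi] at hx; positivity))).div continuousOn_id fun x hx ↦ hx.ne'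
    exact (continuousOn_const.mul hAcont).mul hGcont
  · intro x hx y hy hxy
    calc c * A y * G y ≤ c * A x * G y := by
          gcongr
          · exact (div_pos (hg y hy).1 hy).le
          · exact Real.rpow_le_rpow_of_nonpos (hbase x hx) (by gcongr) (by linarith)
      _ < c * A x * G x := mul_lt_mul_of_pos_left
          (strictAntiOn_one_sub_one_add_mul_rpow_neg_div hb hq hx hy hxy) (mul_pos hc0 (hA x hx).1)
  · have hAlim : Tendsto A (𝓝[>] 0) (𝓝 1) := by
      have hcont : ContinuousAt A 0 :=
        ((by fun_prop : Continuous fun x : ℝ ↦ 1 + x * a).continuousAt).rpow_const (by simp)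
      simpa [A] using hcont.tendsto.mono_left nhdsWithin_le_nhds
    simpa using (tendsto_const_nhds.mul hAlim).mul (tendsto_one_sub_one_add_mul_rpow_neg_div hb q)
  · have hcG : c * A c * G c = A c * (1 - (1 + c * b) ^ (-q)) := by
      simp only [G]
      field_simp
    rw [hcG]
    exact mul_lt_one_of_nonneg_of_lt_one_right (hA c hc0).2 (hg c hc0).1.le (hg c hc0).2

theorem malthusian_exists_unique_general (μL μI τL τI R₀ : ℝ)
    (hμL : 0 < μL) (hμI : 0 < μI) (hτI : 0 < τI) (hR₀ : 1 < R₀) :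
    ∃! α : ℝ, 0 < α ∧
      α = (R₀ / μI) * (1 + α * τL ^ 2 * μL) ^ (-(1 / τL ^ 2) : ℝ)
          * (1 - (1 + α * τI ^ 2 * μI) ^ (-(1 / τI ^ 2) : ℝ)) := by
  have hR : R₀ / μI * (τI ^ 2 * μI * (1 / τI ^ 2)) = R₀ := by field_simp
  have key := existsUnique_pos_eq_mul_rpow_neg_mul_one_sub_rpow_neg (c := R₀ / μI)
    (a := τL ^ 2 * μL) (b := τI ^ 2 * μI) (p := 1 / τL ^ 2) (q := 1 / τI ^ 2)
    (by positivity) (by positivity) (by positivity) (by positivity) (hR ▸ hR₀)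
  simpa only [mul_assoc] using key

/-- For `μ_L, μ_I, τ_L, τ_I > 0` and `R₀ > 1` there is a unique `α > 0` solving the
Malthusian balance equation
`α = (R₀/μ_I)(1 + α τ_L² μ_L)^(-1/τ_L²)(1 - (1 + α τ_I² μ_I)^(-1/τ_I²))`. -/
theorem malthusian_exists_unique (μL μI τL τI R₀ : ℝ)
    (hμL : 0 < μL) (hμI : 0 < μI) (hτL : 0 < τL) (hτI : 0 < τI) (hR₀ : 1 < R₀) :
    ∃! α : ℝ, 0 < α ∧
      α = (R₀ / μI) * (1 + α * τL ^ 2 * μL) ^ (-(1 / τL ^ 2) : ℝ)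
          * (1 - (1 + α * τI ^ 2 * μI) ^ (-(1 / τI ^ 2) : ℝ)) :=
  malthusian_exists_unique_general μL μI τL τI R₀ hμL hμI hτI hR₀
end

section
/- Let μ_I, τ_L, τ_I > 0 and R₀ > 0 be fixed, and let 0 < μ_L < μ_L'. If α > 0 satisfies α = (R₀/μ_I)(1 + α τ_L² μ_L)^(−1/τ_L²)(1 − (1 + α τ_I² μ_I)^(−1/τ_I²)) and α' > 0 satisfies the same equation with μ_L replaced by μ_L', then α' < α. In words: keeping R₀ fixed, the initial exponential growth rate is strictly decreasing in the mean latent period μ_L. -/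
/-!
The growth rate is the positive root of `α = (R₀ / μ_I) L_L(α) (1 - L_I(α))`, where `L_L`, `L_I`
are the Laplace transforms of the latent and infectious period distributions. Rewrite it as
`R₀ / μ_I = (α / (1 - L_I(α))) / L_L(α)`. Since `L_I` is convex with `L_I(0) = 1`, the slope
`(1 - L_I(α)) / α` decreases, so the right-hand side is increasing in `α`; and since `L_L(α)`
depends on `α μ_L` only and decreases in it, the right-hand side strictly increases with `μ_L`.
Hence a larger `μ_L` forces a smaller root.
-/

open Real Set

/-- `E[exp (-α T)]` for `T` Gamma distributed with mean `μ` and coefficient of variation `τ`,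
i.e. with shape `1 / τ ^ 2` and scale `τ ^ 2 μ`. -/
noncomputable def gammaLaplace (μ τ α : ℝ) : ℝ :=
  (1 + α * τ ^ 2 * μ) ^ (-(1 / τ ^ 2) : ℝ)

section

variable {μ μ' τ α α' : ℝ}

@[simp]
theorem gammaLaplace_zero : gammaLaplace μ τ 0 = 1 := by
  simp [gammaLaplace]

theorem one_add_mul_sq_mul_pos (h : 0 ≤ α * μ) : 0 < 1 + α * τ ^ 2 * μ := by
  nlinarith [mul_nonneg (sq_nonneg τ) h]

theorem gammaLaplace_pos (h : 0 ≤ α * μ) : 0 < gammaLaplace μ τ α :=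
  rpow_pos_of_pos (one_add_mul_sq_mul_pos h) _

theorem gammaLaplace_lt_gammaLaplace (hτ : τ ≠ 0) (h₀ : 0 ≤ α * μ) (h : α * μ < α' * μ') :
    gammaLaplace μ' τ α' < gammaLaplace μ τ α := by
  have hτ2 : 0 < τ ^ 2 := by positivity
  refine rpow_lt_rpow_of_neg (one_add_mul_sq_mul_pos h₀) ?_ (by simpa using hτ2)
  nlinarith

theorem gammaLaplace_lt_one (hτ : τ ≠ 0) (h : 0 < α * μ) : gammaLaplace μ τ α < 1 := by
  simpa using gammaLaplace_lt_gammaLaplace (μ := μ) (α := 0) hτ (by simp) (by simpa using h)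

theorem convexOn_gammaLaplace (hμ : 0 ≤ μ) : ConvexOn ℝ (Ici 0) (gammaLaplace μ τ) := by
  have hp : -(1 / τ ^ 2) ≤ 0 := by simp only [neg_nonpos]; positivity
  refine ⟨convex_Ici 0, fun x hx y hy a b ha hb hab ↦ ?_⟩
  have hbase : ∀ z ∈ Ici (0 : ℝ), 1 + z * τ ^ 2 * μ ∈ Ioi 0 := fun z hz ↦
    one_add_mul_sq_mul_pos (mul_nonneg hz hμ)
  have hcomb : 1 + (a • x + b • y) * τ ^ 2 * μ =
      a • (1 + x * τ ^ 2 * μ) + b • (1 + y * τ ^ 2 * μ) := by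
    simp only [smul_eq_mul]; linear_combination (-1 : ℝ) * hab
  simpa only [gammaLaplace, hcomb] using
    (convexOn_rpow_of_nonpos hp).2 (hbase x hx) (hbase y hy) ha hb hab

theorem mul_one_sub_gammaLaplace_le_mul (hμ : 0 ≤ μ) {a b : ℝ} (ha : 0 < a) (hab : a ≤ b) :
    a * (1 - gammaLaplace μ τ b) ≤ b * (1 - gammaLaplace μ τ a) := by
  rcases hab.eq_or_lt with rfl | hab
  · rfl
  have hsecant := (convexOn_gammaLaplace (τ := τ) hμ).secant_mono_aux1 (x := 0) self_mem_Ici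
    (ha.trans hab).le ha hab
  simp only [gammaLaplace_zero, sub_zero, mul_one] at hsecant
  linarith

end

theorem growth_rate_decreasing_in_mean_latent_general (μI τL τI R₀ μL μL' α α' : ℝ)
    (hμI : 0 < μI) (hτL : 0 < τL) (hτI : 0 < τI)
    (hμL : 0 < μL) (hμL' : μL < μL') (hα : 0 < α)
    (hbal : α = (R₀ / μI) * (1 + α * τL ^ 2 * μL) ^ (-(1 / τL ^ 2) : ℝ)
        * (1 - (1 + α * τI ^ 2 * μI) ^ (-(1 / τI ^ 2) : ℝ)))
    (hbal' : α' = (R₀ / μI) * (1 + α' * τL ^ 2 * μL') ^ (-(1 / τL ^ 2) : ℝ)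
        * (1 - (1 + α' * τI ^ 2 * μI) ^ (-(1 / τI ^ 2) : ℝ))) :
    α' < α := by
  by_contra! hle
  have hα' : 0 < α' := hα.trans_le hle
  change α = R₀ / μI * gammaLaplace μL τL α * (1 - gammaLaplace μI τI α) at hbal
  change α' = R₀ / μI * gammaLaplace μL' τL α' * (1 - gammaLaplace μI τI α') at hbal'
  have hlatent : gammaLaplace μL' τL α' < gammaLaplace μL τL α :=
    gammaLaplace_lt_gammaLaplace hτL.ne' (by positivity) (by nlinarith)
  have hinfectious := mul_one_sub_gammaLaplace_le_mul (τ := τI) hμI.le hα hle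
  have hQ : 0 < 1 - gammaLaplace μI τI α :=
    sub_pos.2 (gammaLaplace_lt_one hτI.ne' (by positivity))
  have hL' : 0 < gammaLaplace μL' τL α' := gammaLaplace_pos (by nlinarith)
  have hcross : α * gammaLaplace μL' τL α' * (1 - gammaLaplace μI τI α') =
      α' * gammaLaplace μL τL α * (1 - gammaLaplace μI τI α) := by
    linear_combination gammaLaplace μL' τL α' * (1 - gammaLaplace μI τI α') * hbal -
      gammaLaplace μL τL α * (1 - gammaLaplace μI τI α) * hbal'
  refine hcross.not_lt ?_
  calc α * gammaLaplace μL' τL α' * (1 - gammaLaplace μI τI α')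
      ≤ α' * (1 - gammaLaplace μI τI α) * gammaLaplace μL' τL α' := by
        linarith [mul_le_mul_of_nonneg_right hinfectious hL'.le]
    _ < α' * (1 - gammaLaplace μI τI α) * gammaLaplace μL τL α :=
        mul_lt_mul_of_pos_left hlatent (by positivity)
    _ = α' * gammaLaplace μL τL α * (1 - gammaLaplace μI τI α) := by ring

/-- Keeping `R₀` fixed, the initial exponential growth rate `α` is strictly decreasing
in the mean latent period `μ_L`. -/
theorem growth_rate_decreasing_in_mean_latent (μI τL τI R₀ μL μL' α α' : ℝ)
    (hμI : 0 < μI) (hτL : 0 < τL) (hτI : 0 < τI) (hR₀ : 0 < R₀)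
    (hμL : 0 < μL) (hμL' : μL < μL') (hα : 0 < α) (hα' : 0 < α')
    (hbal : α = (R₀ / μI) * (1 + α * τL ^ 2 * μL) ^ (-(1 / τL ^ 2) : ℝ)
        * (1 - (1 + α * τI ^ 2 * μI) ^ (-(1 / τI ^ 2) : ℝ)))
    (hbal' : α' = (R₀ / μI) * (1 + α' * τL ^ 2 * μL') ^ (-(1 / τL ^ 2) : ℝ)
        * (1 - (1 + α' * τI ^ 2 * μI) ^ (-(1 / τI ^ 2) : ℝ))) :
    α' < α :=
  growth_rate_decreasing_in_mean_latent_general μI τL τI R₀ μL μL' α α' hμI hτL hτI hμL hμL' hα hbal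
    hbal'
end

section
/- Let μ_L, τ_L, τ_I > 0 and R₀ > 0 be fixed, and let 0 < μ_I < μ_I'. If α > 0 satisfies α = (R₀/μ_I)(1 + α τ_L² μ_L)^(−1/τ_L²)(1 − (1 + α τ_I² μ_I)^(−1/τ_I²)) and α' > 0 satisfies the same equation with μ_I replaced by μ_I', then α' < α. In words: keeping R₀ fixed (so that the contact rate λ = R₀/μ_I changes with μ_I), the initial exponential growth rate is strictly decreasing in the mean infectious period μ_I. -/
/-!
Dividing the balance equation by `α τ_I² μ_I` turns it into
`R₀ · (1 + α τ_L² μ_L)^(-1/τ_L²) · g(α τ_I² μ_I) = 1/τ_I²`, where `g x = (1 - (1 + x)^(-s)) / x`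
and `s = 1/τ_I²`. The latent factor is antitone in `α`, and `g` is strictly antitone on `(0, ∞)`,
being the slope of the secant through the origin of the strictly concave `x ↦ 1 - (1 + x)^(-s)`.
Hence if `α ≤ α'`, the left side is strictly smaller for `(μ_I', α')` than for `(μ_I, α)`,
although both sides equal `1/τ_I²`.
-/

open Real Set

theorem strictConvexOn_rpow_of_neg {p : ℝ} (hp : p < 0) :
    StrictConvexOn ℝ (Ioi 0) fun x : ℝ ↦ x ^ p := by
  apply StrictMonoOn.strictConvexOn_of_deriv (convex_Ioi 0)
    fun x hx ↦ (continuousAt_rpow_const x p (Or.inl (ne_of_gt hx))).continuousWithinAt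
  rw [interior_Ioi, Real.deriv_rpow_const']
  exact fun x hx y _ hxy ↦
    mul_lt_mul_of_neg_left (rpow_lt_rpow_of_neg hx hxy (by linarith)) hp

theorem strictConcaveOn_one_sub_one_add_rpow_neg {s : ℝ} (hs : 0 < s) :
    StrictConcaveOn ℝ (Ioi (-1)) fun x : ℝ ↦ 1 - (1 + x) ^ (-s) := by
  have hD : (fun z : ℝ ↦ 1 + z) ⁻¹' Ioi 0 = Ioi (-1) := by ext x; simp [neg_lt_iff_pos_add']
  have h := (strictConvexOn_rpow_of_neg (neg_neg_of_pos hs)).translate_right 1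
  rw [hD] at h
  exact ((concaveOn_const 1 (convex_Ioi _)).sub_strictConvexOn h).congr fun _ _ ↦ rfl

theorem StrictConcaveOn.strictAntiOn_div_self {𝕜 : Type*} [Field 𝕜] [LinearOrder 𝕜]
    [IsStrictOrderedRing 𝕜] {D : Set 𝕜} {f : 𝕜 → 𝕜} (hf : StrictConcaveOn 𝕜 D f) (h0 : 0 ∈ D)
    (hf0 : f 0 = 0) : StrictAntiOn (fun x ↦ f x / x) (D ∩ Ioi 0) := by
  intro x hx y hy hxy
  simpa [hf0] using hf.secant_strict_mono h0 hx.1 hy.1 hx.2.ne' hy.2.ne' hxy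

theorem strictAntiOn_one_sub_one_add_rpow_neg_div {s : ℝ} (hs : 0 < s) :
    StrictAntiOn (fun x : ℝ ↦ (1 - (1 + x) ^ (-s)) / x) (Ioi 0) := by
  have h := (strictConcaveOn_one_sub_one_add_rpow_neg hs).strictAntiOn_div_self
    (by norm_num) (by simp)
  rwa [inter_eq_right.2 (Ioi_subset_Ioi (by norm_num))] at h

theorem mul_mul_div_eq_one_div_of_eq {R μ c a L B : ℝ} (hμ : μ ≠ 0) (hc : c ≠ 0) (ha : a ≠ 0)
    (h : a = R / μ * L * B) : R * L * (B / (a * c * μ)) = 1 / c := by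
  rw [← mul_div_assoc, show R * L * B = a * μ by rw [h]; field_simp]
  field_simp

theorem growth_rate_decreasing_in_mean_infectious_general (μL τL τI R₀ μI μI' α α' : ℝ)
    (hμL : 0 < μL) (hτI : 0 < τI) (hR₀ : 0 < R₀)
    (hμI : 0 < μI) (hμI' : μI < μI') (hα : 0 < α) (hα' : 0 < α')
    (hbal : α = (R₀ / μI) * (1 + α * τL ^ 2 * μL) ^ (-(1 / τL ^ 2) : ℝ)
        * (1 - (1 + α * τI ^ 2 * μI) ^ (-(1 / τI ^ 2) : ℝ)))
    (hbal' : α' = (R₀ / μI') * (1 + α' * τL ^ 2 * μL) ^ (-(1 / τL ^ 2) : ℝ)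
        * (1 - (1 + α' * τI ^ 2 * μI') ^ (-(1 / τI ^ 2) : ℝ))) :
    α' < α := by
  by_contra! hle
  have hμI'₀ : 0 < μI' := hμI.trans hμI'
  have hlatent : (1 + α' * τL ^ 2 * μL) ^ (-(1 / τL ^ 2) : ℝ)
      ≤ (1 + α * τL ^ 2 * μL) ^ (-(1 / τL ^ 2) : ℝ) :=
    rpow_le_rpow_of_nonpos (by positivity) (by gcongr) (neg_nonpos.2 (by positivity))
  have hscaled : α * τI ^ 2 * μI < α' * τI ^ 2 * μI' :=
    calc α * τI ^ 2 * μI ≤ α' * τI ^ 2 * μI := by gcongr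
      _ < α' * τI ^ 2 * μI' := by gcongr
  have hinfectious := strictAntiOn_one_sub_one_add_rpow_neg_div (s := 1 / τI ^ 2) (by positivity)
    (mem_Ioi.2 (by positivity)) (mem_Ioi.2 (by positivity)) hscaled
  have hinfectious_nonneg : 0 ≤ (1 - (1 + α' * τI ^ 2 * μI') ^ (-(1 / τI ^ 2) : ℝ))
      / (α' * τI ^ 2 * μI') :=
    div_nonneg (sub_nonneg.2 (rpow_le_one_of_one_le_of_nonpos
      (le_add_of_nonneg_right (by positivity)) (neg_nonpos.2 (by positivity)))) (by positivity)
  have h := mul_lt_mul' (mul_le_mul_of_nonneg_left hlatent hR₀.le) hinfectious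
    hinfectious_nonneg (by positivity)
  rw [mul_mul_div_eq_one_div_of_eq hμI.ne' (by positivity) hα.ne' hbal,
    mul_mul_div_eq_one_div_of_eq hμI'₀.ne' (by positivity) hα'.ne' hbal'] at h
  exact lt_irrefl _ h

/-- Keeping `R₀` fixed (so the contact rate `λ = R₀/μ_I` changes with `μ_I`), the initial
exponential growth rate `α` is strictly decreasing in the mean infectious period `μ_I`. -/
theorem growth_rate_decreasing_in_mean_infectious (μL τL τI R₀ μI μI' α α' : ℝ)
    (hμL : 0 < μL) (hτL : 0 < τL) (hτI : 0 < τI) (hR₀ : 0 < R₀)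
    (hμI : 0 < μI) (hμI' : μI < μI') (hα : 0 < α) (hα' : 0 < α')
    (hbal : α = (R₀ / μI) * (1 + α * τL ^ 2 * μL) ^ (-(1 / τL ^ 2) : ℝ)
        * (1 - (1 + α * τI ^ 2 * μI) ^ (-(1 / τI ^ 2) : ℝ)))
    (hbal' : α' = (R₀ / μI') * (1 + α' * τL ^ 2 * μL) ^ (-(1 / τL ^ 2) : ℝ)
        * (1 - (1 + α' * τI ^ 2 * μI') ^ (-(1 / τI ^ 2) : ℝ))) :
    α' < α :=
  growth_rate_decreasing_in_mean_infectious_general μL τL τI R₀ μI μI' α α' hμL hτI hR₀ hμI hμI' hα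
    hα' hbal hbal'
end

section
/- Let μ_L, μ_I, τ_I > 0 and R₀ > 0 be fixed, and let 0 < τ_L < τ_L'. If α > 0 satisfies α = (R₀/μ_I)(1 + α τ_L² μ_L)^(−1/τ_L²)(1 − (1 + α τ_I² μ_I)^(−1/τ_I²)) and α' > 0 satisfies the same equation with τ_L replaced by τ_L', then α < α'. In words: the initial exponential growth rate is strictly increasing in the coefficient of variation τ_L of the latent period — a more random latent period increases the growth rate. -/
open Real Set

/-! Write the balance equation as `1 = (R₀ / μI) * P_τ(α) * (Q(α) / α)` with
`P_τ(a) = (1 + a τ² μL)^(-1/τ²)` and `Q(a) = 1 - (1 + a τI² μI)^(-1/τI²)`. The right-hand side is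
antitone in `a`: `P_τ` because the exponent is negative, `Q(a) / a` because it is a secant slope of
the convex function `y ↦ y^(-s)` through `y = 1`. It is strictly increasing in `τ`, because
`P_τ(a) = exp (-a μL · log (1 + x) / x)` with `x = a τ² μL` and `log (1 + x) / x` is strictly
decreasing by concavity of `log`. So `α' ≤ α` would give `1 < 1`. -/

theorem convexOn_rpow_neg {s : ℝ} (hs : 0 ≤ s) : ConvexOn ℝ (Ioi 0) fun x : ℝ ↦ x ^ (-s) := by
  have hexponent : ConvexOn ℝ (Ioi 0) fun x ↦ -(s • log x) :=
    (strictConcaveOn_log_Ioi.concaveOn.smul hs).neg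
  have himage : Convex ℝ ((fun x ↦ -(s • log x)) '' Ioi 0) :=
    (isPreconnected_Ioi.image _
      ((continuousOn_log.mono fun x hx ↦ ne_of_gt hx).const_smul s).neg).convex
  refine ((convexOn_exp.subset (subset_univ _) himage).comp hexponent
    (exp_monotone.monotoneOn _)).congr fun x hx ↦ ?_
  simp [rpow_def_of_pos (mem_Ioi.1 hx), mul_comm]

theorem strictAntiOn_log_one_add_div : StrictAntiOn (fun x : ℝ ↦ log (1 + x) / x) (Ioi 0) := by
  intro x hx y hy hxy
  simp only [mem_Ioi] at hx hy
  have key := strictConcaveOn_log_Ioi.secant_strict_mono (mem_Ioi.2 one_pos)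
    (mem_Ioi.2 (by linarith : 0 < 1 + x)) (mem_Ioi.2 (by linarith : 0 < 1 + y))
    (ne_of_gt (by linarith)) (ne_of_gt (by linarith)) (by linarith)
  simpa only [log_one, sub_zero, add_sub_cancel_left] using key

theorem one_sub_one_add_rpow_neg_pos {x s : ℝ} (hx : 0 < x) (hs : 0 < s) :
    0 < 1 - (1 + x) ^ (-s) :=
  sub_pos.2 (rpow_lt_one_of_one_lt_of_neg (by linarith) (neg_lt_zero.2 hs))

theorem antitoneOn_one_sub_one_add_mul_rpow_neg_div {c s : ℝ} (hc : 0 < c) (hs : 0 ≤ s) :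
    AntitoneOn (fun a : ℝ ↦ (1 - (1 + a * c) ^ (-s)) / a) (Ioi 0) := by
  intro a ha b hb hab
  have hac : 0 < a * c := mul_pos ha hc
  have hbc : 0 < b * c := mul_pos hb hc
  have key := (convexOn_rpow_neg hs).secant_mono (mem_Ioi.2 one_pos) (mem_Ioi.2 (by linarith))
    (mem_Ioi.2 (by linarith)) (ne_of_gt (by linarith)) (ne_of_gt (by linarith))
    (by gcongr : 1 + a * c ≤ 1 + b * c)
  simp only [one_rpow, add_sub_cancel_left] at key
  calc (1 - (1 + b * c) ^ (-s)) / b = -(c * (((1 + b * c) ^ (-s) - 1) / (b * c))) := by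
        field_simp; ring
    _ ≤ -(c * (((1 + a * c) ^ (-s) - 1) / (a * c))) := by gcongr
    _ = (1 - (1 + a * c) ^ (-s)) / a := by field_simp; ring

theorem strictMonoOn_one_add_mul_rpow_neg_one_div {b : ℝ} (hb : 0 < b) :
    StrictMonoOn (fun u : ℝ ↦ (1 + b * u) ^ (-(1 / u))) (Ioi 0) := by
  intro u hu v hv huv
  simp only [mem_Ioi] at hu hv
  have hslope : log (1 + b * v) / (b * v) < log (1 + b * u) / (b * u) :=
    strictAntiOn_log_one_add_div (mem_Ioi.2 (by positivity)) (mem_Ioi.2 (by positivity))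
      (by gcongr)
  have hexp : ∀ w, 0 < w → (1 + b * w) ^ (-(1 / w)) = exp (-b * (log (1 + b * w) / (b * w))) := by
    intro w hw
    rw [rpow_def_of_pos (by positivity)]
    congr 1
    field_simp
  simp only [hexp u hu, hexp v hv, exp_lt_exp]
  nlinarith

/-- The initial exponential growth rate `α` is strictly increasing in the coefficient of
variation `τ_L` of the latent period. -/
theorem growth_rate_increasing_in_cv_latent (μL μI τI R₀ τL τL' α α' : ℝ)
    (hμL : 0 < μL) (hμI : 0 < μI) (hτI : 0 < τI) (hR₀ : 0 < R₀)
    (hτL : 0 < τL) (hτL' : τL < τL') (hα : 0 < α) (hα' : 0 < α')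
    (hbal : α = (R₀ / μI) * (1 + α * τL ^ 2 * μL) ^ (-(1 / τL ^ 2) : ℝ)
        * (1 - (1 + α * τI ^ 2 * μI) ^ (-(1 / τI ^ 2) : ℝ)))
    (hbal' : α' = (R₀ / μI) * (1 + α' * τL' ^ 2 * μL) ^ (-(1 / τL' ^ 2) : ℝ)
        * (1 - (1 + α' * τI ^ 2 * μI) ^ (-(1 / τI ^ 2) : ℝ))) :
    α < α' := by
  by_contra! hle
  have hinfectious := antitoneOn_one_sub_one_add_mul_rpow_neg_div (c := τI ^ 2 * μI)
    (s := 1 / τI ^ 2) (by positivity) (by positivity) hα' hα hle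
  simp only [← mul_assoc] at hinfectious
  have hlatent_rate : (1 + α * τL ^ 2 * μL) ^ (-(1 / τL ^ 2)) ≤
      (1 + α' * τL ^ 2 * μL) ^ (-(1 / τL ^ 2)) :=
    rpow_le_rpow_of_nonpos (by positivity) (by gcongr)
      (by simp only [one_div, neg_nonpos]; positivity)
  have hlatent_cv : (1 + α' * τL ^ 2 * μL) ^ (-(1 / τL ^ 2)) <
      (1 + α' * τL' ^ 2 * μL) ^ (-(1 / τL' ^ 2)) := by
    have := strictMonoOn_one_add_mul_rpow_neg_one_div (mul_pos hα' hμL)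
      (mem_Ioi.2 (pow_pos hτL 2)) (mem_Ioi.2 (pow_pos (hτL.trans hτL') 2)) (by gcongr)
    simpa only [mul_right_comm α' μL] using this
  have hQ : 0 < (1 - (1 + α * τI ^ 2 * μI) ^ (-(1 / τI ^ 2))) / α :=
    div_pos (one_sub_one_add_rpow_neg_pos (by positivity) (by positivity)) hα
  have hQ' : 0 < (1 - (1 + α' * τI ^ 2 * μI) ^ (-(1 / τI ^ 2))) / α' :=
    div_pos (one_sub_one_add_rpow_neg_pos (by positivity) (by positivity)) hα'
  refine lt_irrefl (1 : ℝ) ?_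
  calc 1 = R₀ / μI * (1 + α * τL ^ 2 * μL) ^ (-(1 / τL ^ 2)) *
          ((1 - (1 + α * τI ^ 2 * μI) ^ (-(1 / τI ^ 2))) / α) := by
        rw [← mul_div_assoc, ← hbal, div_self hα.ne']
    _ ≤ R₀ / μI * (1 + α' * τL ^ 2 * μL) ^ (-(1 / τL ^ 2)) *
          ((1 - (1 + α' * τI ^ 2 * μI) ^ (-(1 / τI ^ 2))) / α') := by gcongr
    _ < R₀ / μI * (1 + α' * τL' ^ 2 * μL) ^ (-(1 / τL' ^ 2)) *
          ((1 - (1 + α' * τI ^ 2 * μI) ^ (-(1 / τI ^ 2))) / α') := by gcongr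
    _ = 1 := by rw [← mul_div_assoc, ← hbal', div_self hα'.ne']
end
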